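/- One-site marginal monotonicity: under the hypotheses of the abstract main theorem, for every t ≥ 0 and z ≥ 0, the probability that site z is occupied at time t is at least the probability that site z+1 is occupied at time t, i.e. P(ξ_t(z) = 1) ≥ P(ξ_t(z+1) = 1) when ξ_0 = 1_{(-∞,0]}. -/

import Mathlib

open MeasureTheory ProbabilityTheory

abbrev Config := ℤ → Bool
abbrev ConfigP := ℕ → Bool

/-- Stochastic order on measures: tested against bounded increasing measurable functions. -/
def StochLE {α : Type*} [MeasurableSpace α] [Preorder α] (μ ν : Measure α) : Prop :=
  ∀ f : α → ℝ, Measurable f → Monotone f → (∃ C, ∀ x, |f x| ≤ C) →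
    ∫ x, f x ∂μ ≤ ∫ x, f x ∂ν

/-- The step configuration `1_{(-∞,a]}`. -/
def step (a : ℤ) : Config := fun x => decide (x ≤ a)

/-- The restriction map `η ↦ η[z,∞)`. -/
def restrictFrom (z : ℤ) (η : Config) : ConfigP := fun n => η ((n : ℤ) + z)

/-- The shift `(τη)(x) = η(x+1)`. -/
def shiftτ (η : Config) : Config := fun x => η (x + 1)

/-!
The shift moves the initial step `1_{(-∞,0]}` to `1_{(-∞,-1]}`, which lies below it; attractiveness
propagates this order to time `t`, and covariance identifies the evolved shifted law with the shift
of the evolved law. Testing the resulting order on the increasing event `{η(z) = 1}` gives the claim.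
-/

theorem IsUpperSet.monotone_indicator_one {α : Type*} [Preorder α] {s : Set α} (hs : IsUpperSet s) :
    Monotone (s.indicator (1 : α → ℝ)) := by
  intro a b hab
  by_cases ha : a ∈ s
  · simp [ha, hs hab ha]
  · simp only [Set.indicator_of_notMem ha]
    exact Set.indicator_nonneg (fun _ _ => zero_le_one) b

section StochLE

variable {α : Type*} [MeasurableSpace α] [Preorder α]

theorem stochLE_dirac_of_le {a b : α} (hab : a ≤ b) :
    StochLE (Measure.dirac a) (Measure.dirac b) := by
  intro f hf hmono _
  rw [integral_dirac' f a hf.stronglyMeasurable, integral_dirac' f b hf.stronglyMeasurable]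
  exact hmono hab

theorem StochLE.measure_le_of_isUpperSet {μ ν : Measure α} [IsFiniteMeasure μ]
    [IsFiniteMeasure ν] (h : StochLE μ ν) {s : Set α} (hs : MeasurableSet s)
    (hup : IsUpperSet s) : μ s ≤ ν s := by
  have hbdd : ∃ C, ∀ x, |s.indicator (1 : α → ℝ) x| ≤ C :=
    ⟨1, fun x => by by_cases hx : x ∈ s <;> simp [hx]⟩
  have := h (s.indicator 1) (measurable_const.indicator hs) hup.monotone_indicator_one hbdd
  rw [integral_indicator_one hs, integral_indicator_one hs] at this
  exact (ENNReal.toReal_le_toReal (measure_ne_top μ s) (measure_ne_top ν s)).mp this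

end StochLE

theorem isUpperSet_setOf_apply_eq_true {ι : Type*} (i : ι) :
    IsUpperSet {η : ι → Bool | η i = true} :=
  fun _ _ hab ha => le_antisymm (Bool.le_true _) (ha ▸ hab i)

theorem measurableSet_setOf_apply_eq_true {ι : Type*} (i : ι) :
    MeasurableSet {η : ι → Bool | η i = true} :=
  measurableSet_eq_fun (measurable_pi_apply i) measurable_const

theorem measurable_shiftτ : Measurable shiftτ :=
  measurable_pi_lambda _ fun x => measurable_pi_apply (x + 1)

theorem step_mono : Monotone step :=
  fun _ _ hab x => Bool.le_iff_imp.mpr (by simpa [step] using fun hx : x ≤ _ => hx.trans hab)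

theorem shiftτ_step (a : ℤ) : shiftτ (step a) = step (a - 1) := by
  ext x
  simp only [shiftτ, step, decide_eq_decide]
  omega

theorem stmt6 (P : ℝ → Kernel Config Config) (hP : ∀ t, IsMarkovKernel (P t))
    (hattr : ∀ t, ∀ μ ν : Measure Config, IsProbabilityMeasure μ → IsProbabilityMeasure ν →
      StochLE μ ν → StochLE (μ.bind (P t)) (ν.bind (P t)))
    (hcov : ∀ t, ∀ μ : Measure Config, IsProbabilityMeasure μ →
      (μ.map shiftτ).bind (P t) = ((μ.bind (P t)).map shiftτ))
    (t : ℝ) (z : ℕ) :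
    ((Measure.dirac (step 0)).bind (P t)) {η : Config | η ((z : ℤ) + 1) = true}
      ≤ ((Measure.dirac (step 0)).bind (P t)) {η : Config | η (z : ℤ) = true} := by
  have hshift : (Measure.dirac (step 0)).map shiftτ = Measure.dirac (step (-1)) := by
    rw [Measure.map_dirac' measurable_shiftτ, shiftτ_step]; rfl
  have hle := hattr t _ _ inferInstance inferInstance
    (stochLE_dirac_of_le (step_mono (by norm_num : (-1 : ℤ) ≤ 0)))
  rw [← hshift, hcov t _ inferInstance] at hle
  rw [Measure.dirac_bind (P t).measurable] at hle ⊢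
  have := hP t
  have hs := measurableSet_setOf_apply_eq_true (z : ℤ)
  simpa [Measure.map_apply measurable_shiftτ hs, shiftτ] using
    hle.measure_le_of_isUpperSet hs (isUpperSet_setOf_apply_eq_true _)
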